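/- Let f_k : S^1 → [0,1] be the constant map with value 1/k for k ≥ 1, and let f : ⨆_{k≥1} S^1 → [0,1] be their coproduct, attaching countably many 2-cells ⨆_{k≥1} D^2 to the interval [0,1] along f. In the closure-space pushout (Z, c_Z), with U = ⨆_k (D^2 \ S^1) ⊆ Z, one has c_Z U = U ∪ {1/k : k ≥ 1} and c_Z(c_Z U) = U ∪ {1/k : k ≥ 1} ∪ {0}. In particular c_Z is not idempotent, so the pushout in closure spaces does not agree with the pushout in topological spaces. -/

import Mathlib

/-!
The open cells are dense in the closed cells, so once a set contains all of `U` its closure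
contains the image of every closed cell, i.e. `U` together with the attaching points `1/k`.
Hence `c_Z U = U ∪ {1/k}`, and a second application adds the closure of `{1/k}` in `[0, 1]`,
which contains the new point `0`.
-/

open Classical in
/-- The map `g : X → Z = Y ⊔ (X \ A)` of the pushout of `f : A → Y` along `A ↪ X`:
`g = f` on `A` and the identity on `X \ A`. -/
noncomputable def pushoutMap {X Y : Type*} (A : Set X) (f : X → Y) (x : X) :
    Y ⊕ {x : X // x ∉ A} :=
  if h : x ∈ A then Sum.inl (f x) else Sum.inr ⟨x, h⟩

/-- The closure operator of the pushout `Z = Y ⊔ (X \ A)`: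
`c_Z B = c_Y (B ∩ Y) ∪ g (c_X (B ∩ (X \ A)))`. -/
noncomputable def pushoutClosure {X Y : Type*} (A : Set X) (f : X → Y)
    (cX : Set X → Set X) (cY : Set Y → Set Y)
    (B : Set (Y ⊕ {x : X // x ∉ A})) : Set (Y ⊕ {x : X // x ∉ A}) :=
  Sum.inl '' cY (Sum.inl ⁻¹' B) ∪
    pushoutMap A f '' cX (Subtype.val '' (Sum.inr ⁻¹' B))

open Set Filter Topology

section Pushout

variable {X Y : Type*} (A : Set X) (f : X → Y)

lemma range_pushoutMap :
    range (pushoutMap A f) = Sum.inl '' (f '' A) ∪ range Sum.inr := by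
  ext z
  constructor
  · rintro ⟨x, rfl⟩
    by_cases hx : x ∈ A
    · exact .inl ⟨f x, mem_image_of_mem f hx, by simp [pushoutMap, hx]⟩
    · exact .inr ⟨⟨x, hx⟩, by simp [pushoutMap, hx]⟩
  · rintro (⟨_, ⟨x, hx, rfl⟩, rfl⟩ | ⟨⟨x, hx⟩, rfl⟩)
    · exact ⟨x, by simp [pushoutMap, hx]⟩
    · exact ⟨x, by simp [pushoutMap, hx]⟩

lemma pushoutClosure_of_range_inr_subset {cX : Set X → Set X} (cY : Set Y → Set Y)
    (hdense : cX Aᶜ = univ) {B : Set (Y ⊕ {x : X // x ∉ A})} (hB : range Sum.inr ⊆ B) :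
    pushoutClosure A f cX cY B =
      range Sum.inr ∪ Sum.inl '' (cY (Sum.inl ⁻¹' B) ∪ f '' A) := by
  have hinr : Sum.inr ⁻¹' B = univ := eq_univ_of_forall fun x => hB (mem_range_self x)
  rw [pushoutClosure, hinr, image_univ, Subtype.range_val_subtype]
  change _ ∪ pushoutMap A f '' cX Aᶜ = _
  rw [hdense, image_univ, range_pushoutMap, image_union]
  ac_rfl

theorem pushoutClosure_range_inr_of_closure_image_eq [TopologicalSpace Y] {cX : Set X → Set X}
    (hdense : cX Aᶜ = univ) {S T : Set Y} (hfA : f '' A = S) (hS : closure S = S ∪ T)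
    (hTS : ¬T ⊆ S) :
    letI cZ := pushoutClosure A f cX closure
    cZ (range Sum.inr) = range Sum.inr ∪ Sum.inl '' S ∧
    cZ (cZ (range Sum.inr)) = range Sum.inr ∪ Sum.inl '' (S ∪ T) ∧
    cZ (cZ (range Sum.inr)) ≠ cZ (range Sum.inr) := by
  have hU : pushoutClosure A f cX closure (range Sum.inr) = range Sum.inr ∪ Sum.inl '' S := by
    rw [pushoutClosure_of_range_inr_subset A f closure hdense subset_rfl, preimage_inl_range_inr,
      closure_empty, empty_union, hfA]
  have hUU : pushoutClosure A f cX closure (pushoutClosure A f cX closure (range Sum.inr)) =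
      range Sum.inr ∪ Sum.inl '' (S ∪ T) := by
    rw [pushoutClosure_of_range_inr_subset A f closure hdense (hU ▸ subset_union_left), hU,
      preimage_union, preimage_inl_range_inr, empty_union,
      preimage_image_eq _ Sum.inl_injective, hS, hfA, union_eq_left.2 subset_union_left]
  refine ⟨hU, hUU, fun h => hTS fun t ht => ?_⟩
  have : (Sum.inl t : Y ⊕ {x : X // x ∉ A}) ∈ range Sum.inr ∪ Sum.inl '' S := by
    rw [← hU, ← h, hUU]
    exact .inr ⟨t, .inr ht, rfl⟩
  simpa using this

end Pushout

theorem Filter.Tendsto.closure_range_eq_insert {X : Type*} [TopologicalSpace X] [T2Space X]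
    {u : ℕ → X} {x : X} (hu : Tendsto u atTop (𝓝 x)) :
    closure (range u) = insert x (range u) :=
  (closure_minimal (subset_insert _ _) hu.isCompact_insert_range.isClosed).antisymm <|
    insert_subset (mem_closure_of_tendsto hu (.of_forall mem_range_self)) subset_closure

lemma closure_setOf_one_div_nat :
    closure {r : ℝ | ∃ k : ℕ, 1 ≤ k ∧ r = 1 / k} =
      insert 0 {r : ℝ | ∃ k : ℕ, 1 ≤ k ∧ r = 1 / k} := by
  have hrange :
      {r : ℝ | ∃ k : ℕ, 1 ≤ k ∧ r = 1 / k} = range fun n : ℕ => 1 / ((n : ℝ) + 1) := by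
    ext r
    constructor
    · rintro ⟨k, hk, rfl⟩
      exact ⟨k - 1, by push_cast [Nat.cast_sub hk]; ring⟩
    · rintro ⟨n, rfl⟩
      exact ⟨n + 1, by omega, by push_cast; ring⟩
  rw [hrange, tendsto_one_div_add_atTop_nhds_zero_nat.closure_range_eq_insert]

lemma Metric.dense_ball_in_closedBall {E : Type*} [NormedAddCommGroup E] [NormedSpace ℝ E]
    (x : E) {r : ℝ} (hr : r ≠ 0) : Dense ((↑) ⁻¹' ball x r : Set (closedBall x r)) := by
  rw [Subtype.dense_iff, Subtype.image_preimage_coe, inter_eq_right.2 ball_subset_closedBall,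
    closure_ball x hr]

lemma closure_setOf_one_div_nat_Icc :
    closure {y : Icc (0 : ℝ) 1 | ∃ k : ℕ, 1 ≤ k ∧ (y : ℝ) = 1 / k} =
      {y : Icc (0 : ℝ) 1 | ∃ k : ℕ, 1 ≤ k ∧ (y : ℝ) = 1 / k} ∪ {y | (y : ℝ) = 0} := by
  have hsub : {r : ℝ | ∃ k : ℕ, 1 ≤ k ∧ r = 1 / k} ⊆ Icc 0 1 := by
    rintro _ ⟨k, hk, rfl⟩
    exact ⟨by positivity, div_le_one_of_le₀ (by exact_mod_cast hk) (by positivity)⟩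
  change closure (((↑) : Icc (0 : ℝ) 1 → ℝ) ⁻¹' {r | ∃ k : ℕ, 1 ≤ k ∧ r = 1 / k}) = _
  rw [Topology.IsEmbedding.subtypeVal.closure_eq_preimage_closure_image,
    image_preimage_eq_of_subset (Subtype.range_coe ▸ hsub), closure_setOf_one_div_nat]
  ext
  simp

/-- Example 3.2: attach countably many `2`-cells to the interval `[0, 1]`, the `k`-th cell
(`k ≥ 1`) attached along the constant map `S¹ → [0,1]` with value `1/k`.  The coproduct
`X = ⨆_{k ≥ 1} D²` carries the componentwise topological closure, `A = ⨆_{k ≥ 1} S¹` is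
the coproduct of the boundary circles.  In the closure-space pushout `(Z, c_Z)`, with
`U = ⨆_k (D² \ S¹)`, one has `c_Z U = U ∪ {1/k : k ≥ 1}` and
`c_Z² U = U ∪ {1/k : k ≥ 1} ∪ {0}`; in particular `c_Z` is not idempotent, so the
pushout in closure spaces does not agree with the pushout in topological spaces. -/
theorem countable_cell_attachment_not_topological :
    letI D2 : Type := ↥(Metric.closedBall (0 : EuclideanSpace ℝ (Fin 2)) 1)
    letI J : Type := {k : ℕ // 1 ≤ k}
    letI X : Type := J × D2
    letI A : Set X := {p | ‖(p.2 : EuclideanSpace ℝ (Fin 2))‖ = 1}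
    letI Y : Type := ↥(Set.Icc (0 : ℝ) 1)
    letI f : X → Y := fun p =>
      ⟨1 / (p.1.1 : ℝ), ⟨by positivity,
        div_le_one_of_le₀ (by exact_mod_cast p.1.2) (by positivity)⟩⟩
    letI cX : Set X → Set X := fun S => {p | p.2 ∈ closure {x : D2 | (p.1, x) ∈ S}}
    letI cY : Set Y → Set Y := fun S => closure S
    letI cZ := pushoutClosure A f cX cY
    letI U : Set (Y ⊕ {x : X // x ∉ A}) := Set.range Sum.inr
    cZ U = U ∪ Sum.inl '' {y : Y | ∃ k : ℕ, 1 ≤ k ∧ (y : ℝ) = 1 / k} ∧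
    cZ (cZ U) =
      U ∪ Sum.inl '' ({y : Y | ∃ k : ℕ, 1 ≤ k ∧ (y : ℝ) = 1 / k} ∪ {y : Y | (y : ℝ) = 0}) ∧
    cZ (cZ U) ≠ cZ U := by
  refine pushoutClosure_range_inr_of_closure_image_eq _ _ ?dense ?image
    closure_setOf_one_div_nat_Icc ?zero
  case dense =>
    refine eq_univ_of_forall fun p =>
      Dense.mono ?_ (Metric.dense_ball_in_closedBall 0 one_ne_zero) p.2
    exact fun x hx => (mem_ball_zero_iff.1 hx).ne
  case image =>
    ext y
    constructor
    · rintro ⟨⟨k, x⟩, -, rfl⟩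
      exact ⟨k, k.2, rfl⟩
    · rintro ⟨k, hk, hy⟩
      obtain ⟨z, hz⟩ := (NormedSpace.sphere_nonempty (x := (0 : EuclideanSpace ℝ (Fin 2)))).2
        zero_le_one
      have hz1 : ‖z‖ = 1 := mem_sphere_zero_iff_norm.1 hz
      exact ⟨(⟨k, hk⟩, ⟨z, mem_closedBall_zero_iff.2 hz1.le⟩), hz1, Subtype.ext hy.symm⟩
  case zero =>
    intro h
    obtain ⟨k, hk, hk0⟩ := @h ⟨0, left_mem_Icc.2 zero_le_one⟩ rfl
    exact (one_div_pos.2 (by exact_mod_cast hk : (0 : ℝ) < k)).ne' hk0.symm
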